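/- arXiv:1305.3238 — 2 statements merged into one kernel-verified Lean document; each statement's English description precedes it below -/
import Mathlib

section
/- Let k ≥ 1 be an integer, let s be a complex number with Re s > 1, and let α be a complex number with |α| < k. Then the series Σ_{n≥0} c_{n,k}(s)·(−α)^n/n! is (absolutely) summable, i.e. the function n ↦ c_{n,k}(s)·(−α)^n/n! is summable on ℕ. -/
noncomputable def zetaK (k : ℕ) (s : ℂ) : ℂ :=
  riemannZeta s - ∑ m ∈ Finset.Ico 1 k, (m : ℂ) ^ (-s)

noncomputable def c (n k : ℕ) (s : ℂ) : ℂ :=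
  (∏ j ∈ Finset.range n, (s + j)) * zetaK k (s + n)

/-! The factor `∏ j < n, (s + j) / n!` grows only polynomially in `n`, so its power series in `w`
converges for `‖w‖ < 1` (ratio test). Since `ζ_k(s + n) = ∑_{m ≥ k} m^{-s-n}`, it decays like
`k^{-n}`; the series is therefore dominated by that power series at `w = α / k`. -/

open Complex Filter Finset Topology
open scoped Nat

theorem summable_norm_prod_add_div_factorial_mul_pow (z : ℂ) {w : ℂ} (hw : ‖w‖ < 1) :
    Summable fun n : ℕ => ‖(∏ j ∈ range n, (z + j)) / n ! * w ^ n‖ := by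
  obtain ⟨l, hwl, hl⟩ := exists_between hw
  have hlim : Tendsto (fun n : ℕ => (‖z‖ + n) / (n + 1)) atTop (𝓝 1) := by
    have := (tendsto_one_div_add_atTop_nhds_zero_nat.const_mul (‖z‖ - 1)).const_add 1
    rw [mul_zero, add_zero] at this
    refine this.congr fun n => ?_
    field_simp
    ring
  have hratio := (hlim.mul_const ‖w‖).eventually_lt_const (by rwa [one_mul])
  refine summable_of_ratio_norm_eventually_le hl ?_
  filter_upwards [hratio] with n hn
  have hstep : (∏ j ∈ range (n + 1), (z + j)) / (n + 1)! * w ^ (n + 1)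
      = (∏ j ∈ range n, (z + j)) / n ! * w ^ n * ((z + n) / (n + 1) * w) := by
    rw [prod_range_succ, Nat.factorial_succ, pow_succ]
    push_cast
    field_simp
  have hfactor : ‖(z + n) / (n + 1) * w‖ ≤ l := by
    refine le_trans ?_ hn.le
    rw [norm_mul, norm_div, show ‖(n : ℂ) + 1‖ = n + 1 by norm_cast]
    gcongr
    exact (norm_add_le _ _).trans (by simp)
  rw [norm_norm, norm_norm, hstep, norm_mul _ ((z + n) / (n + 1) * w), mul_comm l]
  gcongr

theorem zetaK_eq_tsum (k : ℕ) {s : ℂ} (hs : 1 < s.re) :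
    zetaK k s = ∑' m : ℕ, ((m + k : ℕ) : ℂ) ^ (-s) := by
  have hsum : Summable fun n : ℕ => (n : ℂ) ^ (-s) := by
    simpa [cpow_neg, one_div] using Complex.summable_one_div_nat_cpow.mpr hs
  have hIco : ∑ m ∈ Ico 1 k, (m : ℂ) ^ (-s) = ∑ m ∈ range k, (m : ℂ) ^ (-s) := by
    refine sum_subset (fun m hm => by simp at hm ⊢; omega) fun m hm hm' => ?_
    obtain rfl : m = 0 := by simp at hm hm'; omega
    rw [Nat.cast_zero, zero_cpow (neg_ne_zero.mpr (by rintro rfl; norm_num at hs))]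
  rw [zetaK, zeta_eq_tsum_one_div_nat_cpow hs, hIco]
  simp only [one_div, ← cpow_neg]
  rw [← hsum.sum_add_tsum_nat_add k, add_sub_cancel_left]

theorem norm_zetaK_add_nat_le {k : ℕ} (hk : 0 < k) {s : ℂ} (hs : 1 < s.re) (n : ℕ) :
    ‖zetaK k (s + n)‖ ≤ (∑' m : ℕ, ((m + k : ℕ) : ℝ) ^ (-s.re)) / (k : ℝ) ^ n := by
  have hre : 1 < (s + n).re := by
    rw [add_re, natCast_re]; linarith [(n.cast_nonneg : (0 : ℝ) ≤ n)]
  have hsum : Summable fun m : ℕ => ((m + k : ℕ) : ℝ) ^ (-s.re) :=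
    (summable_nat_add_iff k).mpr (Real.summable_nat_rpow.mpr (by linarith))
  rw [zetaK_eq_tsum k hre]
  refine tsum_of_norm_bounded (hsum.hasSum.div_const _) fun m => ?_
  have hpos : (0 : ℝ) < (m + k : ℕ) := by positivity
  rw [norm_natCast_cpow_of_pos (by omega), neg_re, add_re, natCast_re, neg_add,
    Real.rpow_add hpos, Real.rpow_neg hpos.le (n : ℝ), Real.rpow_natCast, ← div_eq_mul_inv]
  gcongr
  simp

theorem stmt_1_general (k : ℕ) (s : ℂ) (hs : 1 < s.re)
    (α : ℂ) (hα : ‖α‖ < k) :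
    Summable (fun n : ℕ => c n k s * (-α) ^ n / (n.factorial : ℂ)) := by
  have hk : (0 : ℝ) < k := (norm_nonneg α).trans_lt hα
  set C := ∑' m : ℕ, ((m + k : ℕ) : ℝ) ^ (-s.re)
  have hw : ‖α / k‖ < 1 := by rwa [norm_div, Complex.norm_natCast, div_lt_one hk]
  refine Summable.of_norm_bounded
    ((summable_norm_prod_add_div_factorial_mul_pow s hw).mul_left C) fun n => ?_
  calc ‖c n k s * (-α) ^ n / (n.factorial : ℂ)‖
      = ‖∏ j ∈ range n, (s + j)‖ * ‖zetaK k (s + n)‖ * ‖α‖ ^ n / (n ! : ℝ) := by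
        simp [c]
    _ ≤ ‖∏ j ∈ range n, (s + j)‖ * (C / (k : ℝ) ^ n) * ‖α‖ ^ n / (n ! : ℝ) := by
        gcongr
        exact norm_zetaK_add_nat_le (by exact_mod_cast hk) hs n
    _ = C * ‖(∏ j ∈ range n, (s + j)) / n ! * (α / k) ^ n‖ := by
        simp only [norm_mul, norm_div, norm_pow, Complex.norm_natCast, div_pow]
        ring

theorem stmt_1 (k : ℕ) (hk : 1 ≤ k) (s : ℂ) (hs : 1 < s.re)
    (α : ℂ) (hα : ‖α‖ < k) :
    Summable (fun n : ℕ => c n k s * (-α) ^ n / (n.factorial : ℂ)) :=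
  stmt_1_general k s hs α hα
end

section
/- Let α be a real number with 0 < α < 1 and let G : ℝ → ℂ → ℂ be such that for every x with 0 < x < 1 the function G x is entire (Differentiable ℂ (G x)) and G x w = ζ(w,x) − 1/(w−1) for all w ≠ 1; set γ_0(x) = G x 1. Then the function x ↦ γ_0(x) has derivative −ζ(2,α) at x = α; i.e. HasDerivAt (fun x : ℝ => G x 1) (−ζ(2,α)) α. -/
/-!
For `x, y ∈ (0, 1]` the difference `ζ(s, x) - ζ(s, y)` is entire, and its Dirichlet series
`∑ ((n + x)^{-s} - (n + y)^{-s})` converges locally uniformly on `Re s > 1/2` by the mean value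
theorem, so its value at `s = 1` is `∑ (1/(n + x) - 1/(n + y))`. Hence `γ₀(x) - γ₀(α)` is this
series, and differentiating it termwise in `x` gives `-∑ 1/(n + α)² = -ζ(2, α)`.
-/

open Set Filter Topology Complex HurwitzZeta

lemma Real.rpow_le_rpow_add_rpow {a p q r : ℝ} (ha : 0 < a) (hqp : q ≤ p) (hpr : p ≤ r) :
    a ^ p ≤ a ^ q + a ^ r := by
  rcases le_total a 1 with h | h
  · linarith [Real.rpow_le_rpow_of_exponent_ge ha h hqp, Real.rpow_nonneg ha.le r]
  · linarith [Real.rpow_le_rpow_of_exponent_le h hpr, Real.rpow_nonneg ha.le q]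

lemma summable_nat_add_rpow_neg {a p : ℝ} (ha : 0 < a) (hp : 1 < p) :
    Summable fun n : ℕ => ((n : ℝ) + a) ^ (-p) := by
  refine ((Real.summable_one_div_nat_add_rpow a p).2 hp).congr fun n => ?_
  rw [abs_of_pos (by positivity), one_div, Real.rpow_neg (by positivity)]

lemma norm_ofReal_cpow_neg_sub_le {a b : ℝ} (ha : 0 < a) (hb : 0 < b) {w : ℂ}
    (hw : -1 ≤ w.re) :
    ‖(a : ℂ) ^ (-w) - (b : ℂ) ^ (-w)‖ ≤ ‖w‖ * min a b ^ (-w.re - 1) * |a - b| := by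
  have hpos : ∀ t ∈ uIcc a b, 0 < t := fun t ht => (lt_min ha hb).trans_le ht.1
  have hderiv : ∀ t ∈ uIcc a b, HasDerivWithinAt (fun t : ℝ => (t : ℂ) ^ (-w))
      (-w * (t : ℂ) ^ (-w - 1)) (uIcc a b) t := fun t ht => by
    simpa using ((hasDerivAt_id (t : ℂ)).cpow_const (c := -w)
      (ofReal_mem_slitPlane.2 (hpos t ht))).comp_ofReal.hasDerivWithinAt
  have hbound : ∀ t ∈ uIcc a b,
      ‖-w * (t : ℂ) ^ (-w - 1)‖ ≤ ‖w‖ * min a b ^ (-w.re - 1) := fun t ht => by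
    rw [norm_mul, norm_neg, norm_cpow_eq_rpow_re_of_pos (hpos t ht), sub_re, neg_re, one_re]
    exact mul_le_mul_of_nonneg_left
      (Real.rpow_le_rpow_of_nonpos (lt_min ha hb) ht.1 (by linarith)) (norm_nonneg w)
  simpa [Real.norm_eq_abs] using (convex_uIcc a b).norm_image_sub_le_of_norm_hasDerivWithin_le
    hderiv hbound right_mem_uIcc left_mem_uIcc

lemma continuousOn_tsum_natCast_add_cpow_neg_sub {x y : ℝ} (hx : 0 < x) (hy : 0 < y) :
    ContinuousOn (fun w : ℂ => ∑' n : ℕ, (((n : ℂ) + x) ^ (-w) - ((n : ℂ) + y) ^ (-w)))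
      (Metric.ball 1 (1 / 2)) := by
  set m := min x y
  have hm : 0 < m := lt_min hx hy
  have hne : ∀ {z : ℝ}, 0 < z → ∀ n : ℕ, (n : ℂ) + z ≠ 0 := fun hz n => by
    exact_mod_cast (by positivity : (n : ℝ) + _ ≠ 0)
  refine continuousOn_tsum (u := fun n : ℕ =>
      2 * |x - y| * (((n : ℝ) + m) ^ (-(5 / 2) : ℝ) + ((n : ℝ) + m) ^ (-(3 / 2) : ℝ)))
    (fun n => ?_) ?_ (fun n w hw => ?_)
  · exact ((continuous_neg.const_cpow (Or.inl (hne hx n))).sub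
      (continuous_neg.const_cpow (Or.inl (hne hy n)))).continuousOn
  · exact ((summable_nat_add_rpow_neg hm (by norm_num)).add
      (summable_nat_add_rpow_neg hm (by norm_num))).mul_left _
  · rw [Metric.mem_ball, dist_eq_norm] at hw
    have hre := abs_le.1 ((abs_re_le_norm (w - 1)).trans hw.le)
    have hnorm : ‖w‖ ≤ 2 := by linarith [norm_sub_norm_le w 1, norm_one (α := ℂ)]
    simp only [sub_re, one_re] at hre
    calc ‖((n : ℂ) + x) ^ (-w) - ((n : ℂ) + y) ^ (-w)‖
        ≤ ‖w‖ * ((n : ℝ) + m) ^ (-w.re - 1) * |x - y| := by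
          simpa [min_add_add_left] using
            norm_ofReal_cpow_neg_sub_le (a := n + x) (b := n + y) (by positivity) (by positivity)
              (w := w) (by linarith)
      _ ≤ 2 * (((n : ℝ) + m) ^ (-(5 / 2) : ℝ) + ((n : ℝ) + m) ^ (-(3 / 2) : ℝ)) * |x - y| := by
          gcongr
          exact Real.rpow_le_rpow_add_rpow (by positivity) (by linarith) (by linarith)
      _ = _ := by ring

lemma hurwitzZeta_sub_hurwitzZeta_one {x y : ℝ} (hx : x ∈ Ioc 0 1) (hy : y ∈ Ioc 0 1) :
    hurwitzZeta x 1 - hurwitzZeta y 1 = ∑' n : ℕ, (((n : ℂ) + x)⁻¹ - ((n : ℂ) + y)⁻¹) := by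
  set S := fun w : ℂ => ∑' n : ℕ, (((n : ℂ) + x) ^ (-w) - ((n : ℂ) + y) ^ (-w))
  have hS : ContinuousAt S 1 := (continuousOn_tsum_natCast_add_cpow_neg_sub hx.1 hy.1).continuousAt
    (Metric.ball_mem_nhds _ (by norm_num))
  have hD := (differentiable_hurwitzZeta_sub_hurwitzZeta x y).continuous.continuousAt (x := 1)
  have : NeBot (𝓝[{w : ℂ | 1 < w.re}] 1) := mem_closure_iff_nhdsWithin_neBot.1 (by simp)
  have heq : (fun w => hurwitzZeta x w - hurwitzZeta y w) =ᶠ[𝓝[{w | 1 < w.re}] 1] S :=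
    eventually_nhdsWithin_of_forall fun w hw => by
      change _ - _ = _
      rw [((hasSum_hurwitzZeta_of_one_lt_re (Ioc_subset_Icc_self hx) hw).sub
        (hasSum_hurwitzZeta_of_one_lt_re (Ioc_subset_Icc_self hy) hw)).tsum_eq.symm]
      simp [S, cpow_neg]
  simpa [S, cpow_neg_one] using tendsto_nhds_unique
    ((hD.tendsto.mono_left nhdsWithin_le_nhds).congr' heq) (hS.tendsto.mono_left nhdsWithin_le_nhds)

lemma hasDerivAt_tsum_inv_natCast_add_sub {α : ℝ} (hα : 0 < α) :
    HasDerivAt (fun y : ℝ => ∑' n : ℕ, (((n : ℂ) + y)⁻¹ - ((n : ℂ) + α)⁻¹))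
      (∑' n : ℕ, -(((n : ℂ) + α) ^ 2)⁻¹) α := by
  have hu : Summable fun n : ℕ => (((n : ℝ) + α / 2) ^ 2)⁻¹ := by
    refine (summable_nat_add_rpow_neg (half_pos hα) one_lt_two).congr fun n => ?_
    rw [Real.rpow_neg (by positivity), Real.rpow_two]
  refine hasDerivAt_tsum_of_isPreconnected
    (g := fun (n : ℕ) (y : ℝ) => ((n : ℂ) + y)⁻¹ - ((n : ℂ) + α)⁻¹)
    (g' := fun (n : ℕ) (y : ℝ) => -(((n : ℂ) + y) ^ 2)⁻¹) hu isOpen_Ioi isPreconnected_Ioi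
    (fun n y hy => ?_) (fun n y hy => ?_) (half_lt_self hα) (by simp) (half_lt_self hα)
  · have hy0 : 0 < y := (half_pos hα).trans hy
    have hne : (n : ℂ) + y ≠ 0 := by exact_mod_cast (by positivity : (n : ℝ) + y ≠ 0)
    simpa [neg_div] using
      (((hasDerivAt_id (y : ℂ)).const_add (n : ℂ)).inv hne).comp_ofReal.sub_const
        ((n : ℂ) + α)⁻¹
  · have hy0 : 0 < (n : ℝ) + y := by
      linarith [(half_pos hα).trans (mem_Ioi.1 hy), (n.cast_nonneg : (0 : ℝ) ≤ n)]
    rw [norm_neg, norm_inv, norm_pow, show (n : ℂ) + y = ((n + y : ℝ) : ℂ) by push_cast; rfl,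
      norm_real, Real.norm_of_nonneg hy0.le]
    gcongr
    exact mem_Ioi.1 hy |>.le

theorem hasDerivAt_hurwitzZeta_one {α : ℝ} (hα : α ∈ Ioo 0 1) :
    HasDerivAt (fun x : ℝ => hurwitzZeta x 1) (-hurwitzZeta α 2) α := by
  have hζ2 : hurwitzZeta α 2 = ∑' n : ℕ, (((n : ℂ) + α) ^ 2)⁻¹ := by
    simpa using (hasSum_hurwitzZeta_of_one_lt_re (Ioo_subset_Icc_self hα)
      (by norm_num : 1 < (2 : ℂ).re)).tsum_eq.symm
  have hseries : (fun x : ℝ => hurwitzZeta x 1) =ᶠ[𝓝 α] fun x =>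
      hurwitzZeta α 1 + ∑' n : ℕ, (((n : ℂ) + x)⁻¹ - ((n : ℂ) + α)⁻¹) := by
    filter_upwards [Ioo_mem_nhds hα.1 hα.2] with x hx
    rw [← hurwitzZeta_sub_hurwitzZeta_one (Ioo_subset_Ioc_self hx) (Ioo_subset_Ioc_self hα)]
    ring
  rw [hζ2, ← tsum_neg]
  exact ((hasDerivAt_tsum_inv_natCast_add_sub hα.1).const_add _).congr_of_eventuallyEq hseries

theorem stmt_15 (α : ℝ) (hα0 : 0 < α) (hα1 : α < 1)
    (G : ℝ → ℂ → ℂ)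
    (hG : ∀ x : ℝ, 0 < x → x < 1 → Differentiable ℂ (G x))
    (hG1 : ∀ x : ℝ, 0 < x → x < 1 → ∀ w : ℂ, w ≠ 1 →
      G x w = HurwitzZeta.hurwitzZeta (x : UnitAddCircle) w - 1 / (w - 1)) :
    HasDerivAt (fun x : ℝ => G x 1)
      (-(HurwitzZeta.hurwitzZeta (α : UnitAddCircle) 2)) α := by
  -- Mathlib's `hurwitzZeta x 1` is not `γ₀(x)`, but differs from it by a constant.
  have hGζ : ∀ x ∈ Ioo (0 : ℝ) 1, G x 1 = G α 1 - hurwitzZeta α 1 + hurwitzZeta x 1 := by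
    intro x hx
    have hcont := ((hG x hx.1 hx.2).sub (hG α hα0 hα1)).continuous
    have hext := hcont.ext_on (dense_compl_singleton 1)
      (differentiable_hurwitzZeta_sub_hurwitzZeta x α).continuous fun w (hw : w ≠ 1) => by
        simp only [Pi.sub_apply, hG1 x hx.1 hx.2 w hw, hG1 α hα0 hα1 w hw, sub_sub_sub_cancel_right]
    have h1 := congr_fun hext 1
    simp only [Pi.sub_apply] at h1
    linear_combination h1
  exact ((hasDerivAt_hurwitzZeta_one ⟨hα0, hα1⟩).const_add _).congr_of_eventuallyEq
    (eventually_of_mem (Ioo_mem_nhds hα0 hα1) hGζ)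
end
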